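/- arXiv:2402.18765 — 5 statements merged into one kernel-verified Lean document; each statement's English description precedes it below -/
import Mathlib

section
/- Let t ∈ ℝ³ and T a real 3×3 matrix arising as the Bloch representation of a qubit CPTP channel. Then for every w ∈ ℝ³, ‖t + Tw‖² ≤ 1 − ‖T‖² + ‖w‖², where ‖T‖ is the operator norm of T. -/
open Matrix Complex
open scoped ComplexOrder

noncomputable section

/-- The Pauli matrices X, Y, Z. -/
def pauli : Fin 3 → Matrix (Fin 2) (Fin 2) ℂ
  | 0 => !![0, 1; 1, 0]
  | 1 => !![0, -I; I, 0]
  | 2 => !![1, 0; 0, -1]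

/-- The qubit state (or Hermitian matrix) with Bloch vector `w`: `(1 + w·σ)/2`. -/
def blochState (w : Fin 3 → ℝ) : Matrix (Fin 2) (Fin 2) ℂ :=
  (1 / 2 : ℂ) • (1 + ∑ i, (w i : ℂ) • pauli i)

/-- The Choi matrix of a linear map on 2×2 matrices. -/
def choi (E : Matrix (Fin 2) (Fin 2) ℂ →ₗ[ℂ] Matrix (Fin 2) (Fin 2) ℂ) :
    Matrix (Fin 2 × Fin 2) (Fin 2 × Fin 2) ℂ :=
  Matrix.of fun p q => E (Matrix.single p.2 q.2 1) p.1 q.1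

/-- The operator norm of a real 3×3 matrix, acting on Euclidean space. -/
def opNorm3 (T : Matrix (Fin 3) (Fin 3) ℝ) : ℝ :=
  ‖Matrix.toEuclideanCLM (𝕜 := ℝ) T‖

/-!
Complete positivity makes `E` a positive map, and a Bloch matrix `(1 + w·σ)/2`, whose determinant
is `(1 - ‖w‖²)/4`, is positive semidefinite exactly when `‖w‖ ≤ 1`; hence `v ↦ t + T v` maps the
closed unit ball into itself. For such an affine map and a unit vector `u`, split `w = p + γ u`
with `p ⊥ u`: the points `p ± √(1 - ‖p‖²) u` lie on the unit sphere, and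
`x ↦ ‖t + T (p + x u)‖² - x² ‖T u‖²` is affine, so for `‖w‖ ≤ 1` its values at these two points
bound `‖t + T w‖²` by `1 - (1 - ‖w‖²) ‖T u‖²`. For `‖w‖ ≥ 1` one rescales `w` to the sphere.
Taking the supremum over `u` turns `‖T u‖` into `‖T‖`.
-/

section AffineMapOfUnitBall

open scoped RealInnerProductSpace

variable {V W : Type*} [NormedAddCommGroup V] [InnerProductSpace ℝ V]
  [NormedAddCommGroup W] [InnerProductSpace ℝ W]

lemma norm_add_smul_sq (a b : W) (x : ℝ) :
    ‖a + x • b‖ ^ 2 = ‖a‖ ^ 2 + 2 * x * ⟪a, b⟫ + x ^ 2 * ‖b‖ ^ 2 := by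
  rw [norm_add_sq_real, inner_smul_right, norm_smul, mul_pow, Real.norm_eq_abs, sq_abs]
  ring

lemma norm_add_smul_sq_le_of_abs_le {a b : W} {γ γ' : ℝ} (hγ : |γ| ≤ γ')
    (h_add : ‖a + γ' • b‖ ≤ 1) (h_sub : ‖a - γ' • b‖ ≤ 1) :
    ‖a + γ • b‖ ^ 2 ≤ 1 - (γ' ^ 2 - γ ^ 2) * ‖b‖ ^ 2 := by
  rw [sub_eq_add_neg, ← neg_smul] at h_sub
  have s_add := pow_le_one₀ (norm_nonneg _) h_add (n := 2)
  have s_sub := pow_le_one₀ (norm_nonneg _) h_sub (n := 2)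
  rw [norm_add_smul_sq] at s_add s_sub ⊢
  obtain ⟨hγ₁, hγ₂⟩ := abs_le.1 hγ
  rcases ((abs_nonneg γ).trans hγ).eq_or_lt with h0 | hpos
  · obtain rfl : γ = 0 := by linarith
    subst h0
    linarith
  · nlinarith [mul_le_mul_of_nonneg_left s_add (by linarith : 0 ≤ γ' + γ),
      mul_le_mul_of_nonneg_left s_sub (by linarith : 0 ≤ γ' - γ)]

variable {t : W} {T : V →L[ℝ] W}

lemma norm_sq_add_norm_apply_sq_le_one (hball : ∀ v, ‖v‖ ≤ 1 → ‖t + T v‖ ≤ 1) {u : V}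
    (hu : ‖u‖ ≤ 1) : ‖t‖ ^ 2 + ‖T u‖ ^ 2 ≤ 1 := by
  have h_add := pow_le_one₀ (norm_nonneg _) (hball u hu) (n := 2)
  have h_sub := pow_le_one₀ (norm_nonneg _) (hball (-u) (by rwa [norm_neg])) (n := 2)
  rw [map_neg, ← sub_eq_add_neg] at h_sub
  linarith [parallelogram_law_with_norm ℝ t (T u)]

lemma norm_add_apply_sq_le_of_norm_le_one (hball : ∀ v, ‖v‖ ≤ 1 → ‖t + T v‖ ≤ 1) {u w : V}
    (hu : ‖u‖ = 1) (hw : ‖w‖ ≤ 1) : ‖t + T w‖ ^ 2 ≤ 1 - (1 - ‖w‖ ^ 2) * ‖T u‖ ^ 2 := by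
  set γ := ⟪w, u⟫
  set p := w - γ • u
  have hpu : ⟪p, u⟫ = 0 := by
    simp [p, γ, inner_sub_left, inner_smul_left, hu]
  have hnorm (x : ℝ) : ‖p + x • u‖ ^ 2 = ‖p‖ ^ 2 + x ^ 2 := by
    rw [norm_add_smul_sq, hpu, hu]; ring
  have hw' : w = p + γ • u := by simp [p]
  have hp : ‖p‖ ^ 2 + γ ^ 2 = ‖w‖ ^ 2 := by rw [← hnorm, ← hw']
  have hw2 : ‖w‖ ^ 2 ≤ 1 := pow_le_one₀ (norm_nonneg _) hw
  set γ' := √(1 - ‖p‖ ^ 2)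
  have hγ' : γ' ^ 2 = 1 - ‖p‖ ^ 2 := Real.sq_sqrt (by nlinarith)
  have hγ : |γ| ≤ γ' := Real.abs_le_sqrt (by linarith)
  have hsphere (x : ℝ) (hx : x ^ 2 = γ' ^ 2) : ‖(t + T p) + x • T u‖ ≤ 1 := by
    have := hball (p + x • u) (by rw [← sq_le_one_iff₀ (norm_nonneg _), hnorm]; linarith)
    rwa [map_add, map_smul, ← add_assoc] at this
  have key := norm_add_smul_sq_le_of_abs_le hγ (hsphere γ' rfl)
    (by simpa [sub_eq_add_neg] using hsphere (-γ') (neg_sq γ'))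
  have hTw : t + T w = (t + T p) + γ • T u := by rw [hw', map_add, map_smul, add_assoc]
  rwa [hTw, show 1 - ‖w‖ ^ 2 = γ' ^ 2 - γ ^ 2 by linarith]

lemma norm_add_apply_sq_le_of_one_le_norm (hball : ∀ v, ‖v‖ ≤ 1 → ‖t + T v‖ ≤ 1) {u w : V}
    (hu : ‖u‖ ≤ 1) (hw : 1 ≤ ‖w‖) : ‖t + T w‖ ^ 2 ≤ 1 - ‖T u‖ ^ 2 + ‖w‖ ^ 2 := by
  set R := ‖w‖
  set v := R⁻¹ • w
  have hR : R ≠ 0 := by positivity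
  have hv : ‖v‖ = 1 := norm_smul_inv_norm (norm_pos_iff.1 (by positivity))
  have hTw : t + T w = t + R • T v := by simp [v, smul_smul, hR]
  have hv1 := pow_le_one₀ (norm_nonneg _) (hball v hv.le) (n := 2)
  have htv := norm_sq_add_norm_apply_sq_le_one hball hv.le
  have htu := norm_sq_add_norm_apply_sq_le_one hball hu
  rw [norm_add_sq_real] at hv1
  rw [hTw, norm_add_smul_sq]
  -- `‖t + R • T v‖²` is `R ‖t + T v‖² + (R - 1) (R ‖T v‖² - ‖t‖²)`
  nlinarith [mul_le_mul_of_nonneg_left hv1 (by positivity : 0 ≤ R),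
    mul_nonneg (mul_nonneg (by positivity : 0 ≤ R) (sub_nonneg.2 hw))
      (by nlinarith : 0 ≤ 1 - ‖T v‖ ^ 2),
    mul_nonneg (sub_nonneg.2 hw) (sq_nonneg ‖t‖)]

lemma norm_add_apply_sq_le_of_norm_eq_one (hball : ∀ v, ‖v‖ ≤ 1 → ‖t + T v‖ ≤ 1) {u : V}
    (hu : ‖u‖ = 1) (w : V) : ‖t + T w‖ ^ 2 ≤ 1 - ‖T u‖ ^ 2 + ‖w‖ ^ 2 := by
  rcases le_total ‖w‖ 1 with hw | hw
  · have hTu := norm_sq_add_norm_apply_sq_le_one hball hu.le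
    nlinarith [norm_add_apply_sq_le_of_norm_le_one hball hu hw,
      mul_le_mul_of_nonneg_left (by nlinarith : ‖T u‖ ^ 2 ≤ 1) (sq_nonneg ‖w‖)]
  · exact norm_add_apply_sq_le_of_one_le_norm hball hu.le hw

lemma norm_add_apply_sq_le [Nontrivial V] (hball : ∀ v, ‖v‖ ≤ 1 → ‖t + T v‖ ≤ 1) (w : V) :
    ‖t + T w‖ ^ 2 ≤ 1 - ‖T‖ ^ 2 + ‖w‖ ^ 2 := by
  obtain ⟨u, hu⟩ := exists_norm_eq V zero_le_one
  have hC : 0 ≤ 1 - ‖t + T w‖ ^ 2 + ‖w‖ ^ 2 := by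
    linarith [norm_add_apply_sq_le_of_norm_eq_one hball hu w, sq_nonneg ‖T u‖]
  have hT : ‖T‖ ≤ √(1 - ‖t + T w‖ ^ 2 + ‖w‖ ^ 2) :=
    T.opNorm_le_of_unit_norm (Real.sqrt_nonneg _) fun x hx ↦ Real.le_sqrt_of_sq_le (by
      linarith [norm_add_apply_sq_le_of_norm_eq_one hball hx w])
  nlinarith [pow_le_pow_left₀ (norm_nonneg T) hT 2, Real.sq_sqrt hC]

end AffineMapOfUnitBall

lemma Matrix.IsHermitian.posSemidef_of_trace_nonneg_of_det_nonneg {𝕜 : Type*} [RCLike 𝕜]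
    {A : Matrix (Fin 2) (Fin 2) 𝕜} (hA : A.IsHermitian) (htr : 0 ≤ A.trace) (hdet : 0 ≤ A.det) :
    A.PosSemidef := by
  rw [hA.trace_eq_sum_eigenvalues, Fin.sum_univ_two] at htr
  rw [hA.det_eq_prod_eigenvalues, Fin.prod_univ_two] at hdet
  norm_cast at htr hdet
  rw [hA.posSemidef_iff_eigenvalues_nonneg]
  intro i
  fin_cases i <;> simp <;> nlinarith

lemma blochState_eq (w : Fin 3 → ℝ) :
    blochState w = !![(1 + w 2 : ℂ) / 2, (w 0 - I * w 1) / 2;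
                      (w 0 + I * w 1) / 2, (1 - w 2 : ℂ) / 2] := by
  ext i j
  fin_cases i <;> fin_cases j <;> simp [blochState, pauli, Fin.sum_univ_three] <;> ring

lemma isHermitian_blochState (w : Fin 3 → ℝ) : (blochState w).IsHermitian := by
  rw [blochState_eq]
  ext i j
  fin_cases i <;> fin_cases j <;> simp [Complex.ext_iff]

lemma trace_blochState (w : Fin 3 → ℝ) : (blochState w).trace = 1 := by
  rw [blochState_eq, trace_fin_two_of]
  ring

lemma det_blochState (w : Fin 3 → ℝ) :
    (blochState w).det = ((1 - ∑ i, w i ^ 2) / 4 : ℝ) := by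
  rw [blochState_eq, det_fin_two_of, Fin.sum_univ_three]
  push_cast
  linear_combination ((w 1 : ℂ) ^ 2 / 4) * I_sq

lemma posSemidef_blochState_iff (w : Fin 3 → ℝ) :
    (blochState w).PosSemidef ↔ ∑ i, w i ^ 2 ≤ 1 := by
  constructor
  · intro h
    have := h.det_nonneg
    rw [det_blochState, Complex.zero_le_real] at this
    linarith
  · intro hw
    refine (isHermitian_blochState w).posSemidef_of_trace_nonneg_of_det_nonneg
      (by rw [trace_blochState]; exact zero_le_one) ?_
    rw [det_blochState, Complex.zero_le_real]
    linarith

section Choi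

variable (E : Matrix (Fin 2) (Fin 2) ℂ →ₗ[ℂ] Matrix (Fin 2) (Fin 2) ℂ)

lemma apply_eq_sum_choi (A : Matrix (Fin 2) (Fin 2) ℂ) (i j : Fin 2) :
    E A i j = ∑ k, ∑ l, A k l * choi E (i, k) (j, l) := by
  conv_lhs => rw [A.matrix_eq_sum_single]
  simp only [map_sum, Matrix.sum_apply]
  refine Finset.sum_congr rfl fun k _ ↦ Finset.sum_congr rfl fun l _ ↦ ?_
  rw [show single k l (A k l) = A k l • single k l 1 by simp, map_smul]
  rfl

lemma conjTranspose_apply_of_isHermitian_choi (hE : (choi E).IsHermitian)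
    (A : Matrix (Fin 2) (Fin 2) ℂ) : (E A)ᴴ = E Aᴴ := by
  ext i j
  simp only [conjTranspose_apply, apply_eq_sum_choi, star_sum, star_mul', hE.apply]
  rw [Finset.sum_comm]

lemma dotProduct_mulVec_apply_conjTranspose_mul_self (B : Matrix (Fin 2) (Fin 2) ℂ)
    (z : Fin 2 → ℂ) :
    star z ⬝ᵥ E (Bᴴ * B) *ᵥ z = ∑ m, star (fun p : Fin 2 × Fin 2 ↦ z p.1 * B m p.2) ⬝ᵥ
      choi E *ᵥ fun p ↦ z p.1 * B m p.2 := by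
  simp only [dotProduct, mulVec, Pi.star_apply, apply_eq_sum_choi E (Bᴴ * B), mul_apply,
    conjTranspose_apply, Fintype.sum_prod_type, Fin.sum_univ_two, star_mul', RCLike.star_def]
  ring

open scoped MatrixOrder in
lemma posSemidef_apply_of_posSemidef_choi (hE : (choi E).PosSemidef)
    {M : Matrix (Fin 2) (Fin 2) ℂ} (hM : M.PosSemidef) : (E M).PosSemidef := by
  obtain ⟨B, rfl⟩ := CStarAlgebra.nonneg_iff_eq_star_mul_self.mp hM.nonneg
  refine .of_dotProduct_mulVec_nonneg ?_ fun z ↦ ?_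
  · rw [IsHermitian, conjTranspose_apply_of_isHermitian_choi E hE.isHermitian, hM.isHermitian.eq]
  · rw [star_eq_conjTranspose, dotProduct_mulVec_apply_conjTranspose_mul_self]
    exact Finset.sum_nonneg fun m _ ↦ hE.dotProduct_mulVec_nonneg _

end Choi
lemma sum_sq_add_mulVec_le_one
    {E : Matrix (Fin 2) (Fin 2) ℂ →ₗ[ℂ] Matrix (Fin 2) (Fin 2) ℂ} (hCP : (choi E).PosSemidef)
    {t : Fin 3 → ℝ} {T : Matrix (Fin 3) (Fin 3) ℝ}
    (hBloch : ∀ w : Fin 3 → ℝ, E (blochState w) = blochState fun i => t i + T.mulVec w i)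
    {v : Fin 3 → ℝ} (hv : ∑ i, v i ^ 2 ≤ 1) : ∑ i, (t i + T.mulVec v i) ^ 2 ≤ 1 := by
  have := posSemidef_apply_of_posSemidef_choi E hCP ((posSemidef_blochState_iff v).2 hv)
  rwa [hBloch, posSemidef_blochState_iff] at this

theorem bloch_image_norm_sq_le_general (E : Matrix (Fin 2) (Fin 2) ℂ →ₗ[ℂ] Matrix (Fin 2) (Fin 2) ℂ)
    (hCP : (choi E).PosSemidef)
    (t : Fin 3 → ℝ) (T : Matrix (Fin 3) (Fin 3) ℝ)
    (hBloch : ∀ w : Fin 3 → ℝ,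
      E (blochState w) = blochState fun i => t i + T.mulVec w i) :
    ∀ w : Fin 3 → ℝ,
      ∑ i, (t i + T.mulVec w i) ^ 2 ≤ 1 - opNorm3 T ^ 2 + ∑ i, w i ^ 2 := by
  have hball (v : EuclideanSpace ℝ (Fin 3)) (hv : ‖v‖ ≤ 1) :
      ‖WithLp.toLp 2 t + toEuclideanCLM (𝕜 := ℝ) T v‖ ≤ 1 := by
    rw [← sq_le_one_iff₀ (norm_nonneg _), EuclideanSpace.real_norm_sq_eq]
    simp only [WithLp.ofLp_add, ofLp_toEuclideanCLM, Pi.add_apply]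
    refine sum_sq_add_mulVec_le_one hCP hBloch ?_
    rw [← EuclideanSpace.real_norm_sq_eq]
    exact pow_le_one₀ (norm_nonneg _) hv
  intro w
  simpa [opNorm3, EuclideanSpace.real_norm_sq_eq] using norm_add_apply_sq_le hball (WithLp.toLp 2 w)

/-- If `(t, T)` is the Bloch representation of a qubit CPTP channel,
then for every `w ∈ ℝ³`, `‖t + Tw‖² ≤ 1 − ‖T‖² + ‖w‖²`. -/
theorem bloch_image_norm_sq_le (E : Matrix (Fin 2) (Fin 2) ℂ →ₗ[ℂ] Matrix (Fin 2) (Fin 2) ℂ)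
    (hTP : ∀ A, (E A).trace = A.trace)
    (hCP : (choi E).PosSemidef)
    (t : Fin 3 → ℝ) (T : Matrix (Fin 3) (Fin 3) ℝ)
    (hBloch : ∀ w : Fin 3 → ℝ,
      E (blochState w) = blochState fun i => t i + T.mulVec w i) :
    ∀ w : Fin 3 → ℝ,
      ∑ i, (t i + T.mulVec w i) ^ 2 ≤ 1 - opNorm3 T ^ 2 + ∑ i, w i ^ 2 :=
  bloch_image_norm_sq_le_general E hCP t T hBloch

end
end

section
/- Let λ₁, λ₂, λ₃ ∈ ℝ with |λ₁| ≥ |λ₂| ≥ |λ₃| and |λ₁| < 1, and let s ≥ 0. Suppose s² ≤ (1 − λ₃)² − (λ₁ − λ₂)² and s² ≤ (1 + λ₃)² − (λ₁ + λ₂)². Then s² ≤ (1 − λ₃²)(1 − λ₁²). -/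
/-- Algebraic core of the Choi-positivity analysis of a qubit channel:
if `|λ₁| ≥ |λ₂| ≥ |λ₃|`, `|λ₁| < 1`, `s ≥ 0`, and
`s² ≤ (1 − λ₃)² − (λ₁ − λ₂)²` and `s² ≤ (1 + λ₃)² − (λ₁ + λ₂)²`,
then `s² ≤ (1 − λ₃²)(1 − λ₁²)`. -/
theorem choi_positivity_algebraic_core (l1 l2 l3 s : ℝ)
    (h12 : |l2| ≤ |l1|) (h23 : |l3| ≤ |l2|) (h1 : |l1| < 1) (hs : 0 ≤ s)
    (hA : s ^ 2 ≤ (1 - l3) ^ 2 - (l1 - l2) ^ 2)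
    (hB : s ^ 2 ≤ (1 + l3) ^ 2 - (l1 + l2) ^ 2) :
    s ^ 2 ≤ (1 - l3 ^ 2) * (1 - l1 ^ 2) := by
  have h12' : l2 ^ 2 ≤ l1 ^ 2 := by
    have := sq_abs l1; have := sq_abs l2; nlinarith [abs_nonneg l1, abs_nonneg l2]
  have h23' : l3 ^ 2 ≤ l2 ^ 2 := by
    have := sq_abs l2; have := sq_abs l3; nlinarith [abs_nonneg l2, abs_nonneg l3]
  have h1' : l1 ^ 2 < 1 := by
    have := sq_abs l1; nlinarith [abs_nonneg l1]
  rcases le_total l3 (l1 * l2) with hq | hq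
  · -- in this case `B ≤ T`
    have : (1 + l3) ^ 2 - (l1 + l2) ^ 2 ≤ (1 - l3 ^ 2) * (1 - l1 ^ 2) := by
      nlinarith [mul_nonneg (sub_nonneg.2 hq) (sub_nonneg.2 h1'.le),
        mul_nonneg (sub_nonneg.2 hq) (sub_nonneg.2 h23'),
        sq_nonneg (l2 - l1 * l3), sq_nonneg (l2 + l1 * l3),
        sq_nonneg (l1 - l2), sq_nonneg (l1 + l2),
        mul_nonneg (sub_nonneg.2 hq) (sq_nonneg l3)]
    linarith
  · -- in this case `A ≤ T`
    have : (1 - l3) ^ 2 - (l1 - l2) ^ 2 ≤ (1 - l3 ^ 2) * (1 - l1 ^ 2) := by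
      nlinarith [mul_nonneg (sub_nonneg.2 hq) (sub_nonneg.2 h1'.le),
        mul_nonneg (sub_nonneg.2 hq) (sub_nonneg.2 h23'),
        sq_nonneg (l2 - l1 * l3), sq_nonneg (l2 + l1 * l3),
        sq_nonneg (l1 - l2), sq_nonneg (l1 + l2),
        mul_nonneg (sub_nonneg.2 hq) (sq_nonneg l3)]
    linarith
end

section
/- Fix δ ∈ [0, 1]. The function g(m) = √((m + δ)m) + √((1 − m)(1 − m − δ)) defined for m ∈ [0, 1 − δ] attains its minimum at an endpoint m = 0 or m = 1 − δ, and hence g(m) ≥ √(1 − δ) for all m ∈ [0, 1 − δ]. -/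
lemma fidelity_key (δ m : ℝ) (hδ : δ ∈ Set.Icc (0 : ℝ) 1)
    (hm : m ∈ Set.Icc (0 : ℝ) (1 - δ)) :
    Real.sqrt (1 - δ) ≤ Real.sqrt ((m + δ) * m) + Real.sqrt ((1 - m) * (1 - m - δ)) := by
  obtain ⟨hδ0, hδ1⟩ := hδ
  obtain ⟨hm0, hm1⟩ := hm
  set a := Real.sqrt ((m + δ) * m) with ha
  set b := Real.sqrt ((1 - m) * (1 - m - δ)) with hb
  have h1 : (0:ℝ) ≤ (m + δ) * m := by nlinarith
  have h2 : (0:ℝ) ≤ (1 - m) * (1 - m - δ) := by nlinarith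
  have ha0 : 0 ≤ a := Real.sqrt_nonneg _
  have hb0 : 0 ≤ b := Real.sqrt_nonneg _
  have ha2 : a ^ 2 = (m + δ) * m := Real.sq_sqrt h1
  have hb2 : b ^ 2 = (1 - m) * (1 - m - δ) := Real.sq_sqrt h2
  have hab : m * (1 - m - δ) ≤ a * b := by
    rw [ha, hb, ← Real.sqrt_mul h1]
    calc m * (1 - m - δ) = Real.sqrt ((m * (1 - m - δ))^2) := by
          rw [Real.sqrt_sq (by nlinarith)]
      _ ≤ Real.sqrt ((m + δ) * m * ((1 - m) * (1 - m - δ))) := by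
          apply Real.sqrt_le_sqrt
          nlinarith [mul_nonneg (mul_nonneg hm0 (show (0:ℝ) ≤ 1 - m - δ by linarith)) hδ0]
  have hsq : 1 - δ ≤ (a + b) ^ 2 := by nlinarith
  calc Real.sqrt (1 - δ) ≤ Real.sqrt ((a + b) ^ 2) := Real.sqrt_le_sqrt hsq
    _ = a + b := Real.sqrt_sq (by linarith)

/-- For fixed `δ ∈ [0,1]`, the function
`g(m) = √((m+δ)m) + √((1−m)(1−m−δ))` on `[0, 1−δ]` attains its minimum at an endpoint
(`m = 0` or `m = 1−δ`), and hence `g(m) ≥ √(1−δ)` for all `m ∈ [0, 1−δ]`. -/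
theorem endpoint_min_of_fidelity_fn (δ : ℝ) (hδ : δ ∈ Set.Icc (0 : ℝ) 1) :
    (∃ m₀ ∈ ({0, 1 - δ} : Set ℝ), ∀ m ∈ Set.Icc (0 : ℝ) (1 - δ),
        Real.sqrt ((m₀ + δ) * m₀) + Real.sqrt ((1 - m₀) * (1 - m₀ - δ)) ≤
          Real.sqrt ((m + δ) * m) + Real.sqrt ((1 - m) * (1 - m - δ))) ∧
      ∀ m ∈ Set.Icc (0 : ℝ) (1 - δ),
        Real.sqrt (1 - δ) ≤
          Real.sqrt ((m + δ) * m) + Real.sqrt ((1 - m) * (1 - m - δ)) := by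
  have hg0 : Real.sqrt ((0 + δ) * 0) + Real.sqrt ((1 - 0) * (1 - 0 - δ)) = Real.sqrt (1 - δ) := by
    simp
  refine ⟨⟨0, Or.inl rfl, fun m hm => ?_⟩, fun m hm => fidelity_key δ m hδ hm⟩
  rw [hg0]
  exact fidelity_key δ m hδ hm
end

section
/- Let (v_k)_{k≥0} and (w_k)_{k≥0} be sequences in ℝ³ with w₀ = 0, let p ∈ (0, 1/2), let M = diag(1−2p, 1−2p, 1), and let D be a 3×3 matrix whose only nonzero entries are in the upper-left 2×2 block, with ‖D restricted to the first two coordinates‖ ≤ c (i.e., (Dv)₃ = 0 and ‖Dv‖² ≤ c²(v₁² + v₂²) for all v). Suppose that for each k ≥ 1 there is a norm-nonincreasing map T_k (‖T_k x‖ ≤ ‖x‖) such that v_k = T_k M v_{k−1} and w_k = T_k D v_{k−1} + T_k M w_{k−1}, and that ‖v₀‖ ≤ 1. Then for all n, ‖w_n‖² ≤ [c²/(2p(1−p)(1−(1−2p)²))](‖v₀‖² − ‖v_n‖²). -/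
open Matrix

noncomputable section

/-- Bloch-vector recursion for a dephasing channel (probability `p`)
with unital (norm-nonincreasing) controls `T_k`, where the derivative drift `D` acts
only in the XY-plane with strength at most `c`. Then
`‖w_n‖² ≤ [c²/(2p(1−p)(1−(1−2p)²))] (‖v₀‖² − ‖v_n‖²)`. -/
theorem dephasing_derivative_recursion_bound
    (p c : ℝ) (hp : 0 < p) (hp' : p < 1 / 2) (hc : 0 ≤ c)
    (D : Matrix (Fin 3) (Fin 3) ℝ)
    (hD3 : ∀ x : Fin 3 → ℝ, D.mulVec x 2 = 0)
    (hDnorm : ∀ x : Fin 3 → ℝ,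
      ∑ i, (D.mulVec x i) ^ 2 ≤ c ^ 2 * ((x 0) ^ 2 + (x 1) ^ 2))
    (T : ℕ → Matrix (Fin 3) (Fin 3) ℝ)
    (hT : ∀ k, ∀ x : Fin 3 → ℝ, ∑ i, ((T k).mulVec x i) ^ 2 ≤ ∑ i, x i ^ 2)
    (v w : ℕ → Fin 3 → ℝ)
    (hw0 : w 0 = 0) (hv0 : ∑ i, (v 0 i) ^ 2 ≤ 1)
    (hv : ∀ k, v (k + 1) =
      (T (k + 1)).mulVec ((Matrix.diagonal ![1 - 2 * p, 1 - 2 * p, 1]).mulVec (v k)))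
    (hw : ∀ k, w (k + 1) =
      (T (k + 1)).mulVec (D.mulVec (v k) +
        (Matrix.diagonal ![1 - 2 * p, 1 - 2 * p, 1]).mulVec (w k))) :
    ∀ n, ∑ i, (w n i) ^ 2 ≤
      c ^ 2 / (2 * p * (1 - p) * (1 - (1 - 2 * p) ^ 2)) *
        ((∑ i, (v 0 i) ^ 2) - ∑ i, (v n i) ^ 2) := by
  have h2p : 0 < 1 - 2 * p := by linarith
  have h1p : 0 < 1 - p := by linarith
  obtain ⟨μ, hμdef⟩ : ∃ x : ℝ, x = 1 - 2 * p := ⟨_, rfl⟩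
  rw [← hμdef] at hv hw ⊢
  have hμ0 : 0 < μ := by rw [hμdef]; linarith
  have hden : 0 < 1 - μ ^ 2 := by rw [hμdef]; nlinarith
  set M := Matrix.diagonal ![μ, μ, (1:ℝ)] with hM
  have hMv : ∀ (x : Fin 3 → ℝ),
      M.mulVec x 0 = μ * x 0 ∧ M.mulVec x 1 = μ * x 1 ∧ M.mulVec x 2 = x 2 := by
    intro x
    refine ⟨?_, ?_, ?_⟩ <;> simp [hM, Matrix.mulVec_diagonal]
  have key : ∀ a d : ℝ, (d + μ * a) ^ 2 ≤ a ^ 2 + d ^ 2 / (1 - μ ^ 2) := by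
    intro a d
    have h : (d + μ * a) ^ 2 - a ^ 2 ≤ d ^ 2 / (1 - μ ^ 2) := by
      rw [le_div_iff₀ hden]
      nlinarith [sq_nonneg ((1 - μ ^ 2) * a - μ * d)]
    linarith
  have hsum : ∀ x : Fin 3 → ℝ,
      ∑ i, (M.mulVec x i) ^ 2 = μ ^ 2 * (x 0) ^ 2 + μ ^ 2 * (x 1) ^ 2 + (x 2) ^ 2 := by
    intro x
    obtain ⟨h0, h1, h2⟩ := hMv x
    rw [Fin.sum_univ_three, h0, h1, h2]; ring
  -- V is nonincreasing with quantified XY loss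
  have hVstep : ∀ k, (1 - μ ^ 2) * ((v k 0) ^ 2 + (v k 1) ^ 2)
      + (∑ i, (v (k + 1) i) ^ 2) ≤ ∑ i, (v k i) ^ 2 := by
    intro k
    have h1 := hT (k + 1) (M.mulVec (v k))
    rw [hsum] at h1
    rw [hv k]
    simp only [Fin.sum_univ_three] at h1 ⊢
    nlinarith [h1]
  -- W increment bound
  have hWstep : ∀ k, ∑ i, (w (k + 1) i) ^ 2 ≤ (∑ i, (w k i) ^ 2)
      + c ^ 2 * ((v k 0) ^ 2 + (v k 1) ^ 2) / (1 - μ ^ 2) := by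
    intro k
    rw [hw k]
    have h1 := hT (k + 1) (D.mulVec (v k) + M.mulVec (w k))
    obtain ⟨m0, m1, m2⟩ := hMv (w k)
    have hd2 := hD3 (v k)
    have hDn := hDnorm (v k)
    simp only [Fin.sum_univ_three, Pi.add_apply, m0, m1, m2, hd2, zero_add] at h1 hDn ⊢
    have k0 := key (w k 0) (D.mulVec (v k) 0)
    have k1 := key (w k 1) (D.mulVec (v k) 1)
    have hsplit := add_div ((D.mulVec (v k) 0) ^ 2) ((D.mulVec (v k) 1) ^ 2) (1 - μ ^ 2)
    have hq : ((D.mulVec (v k) 0) ^ 2 + (D.mulVec (v k) 1) ^ 2) / (1 - μ ^ 2)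
        ≤ c ^ 2 * ((v k 0) ^ 2 + (v k 1) ^ 2) / (1 - μ ^ 2) := by
      apply div_le_div_of_nonneg_right ?_ hden.le
      nlinarith [hDn]
    linarith [h1, k0, k1, hq, hsplit]
  intro n
  induction n with
  | zero => simp [hw0]
  | succ n ih =>
    have hV := hVstep n
    have hW := hWstep n
    have hK : 0 ≤ c ^ 2 / (2 * p * (1 - p) * (1 - μ ^ 2)) := by positivity
    have hS : (0:ℝ) ≤ (v n 0) ^ 2 + (v n 1) ^ 2 := by positivity
    have hstep : c ^ 2 * ((v n 0) ^ 2 + (v n 1) ^ 2) / (1 - μ ^ 2)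
        ≤ c ^ 2 / (2 * p * (1 - p) * (1 - μ ^ 2))
          * ((∑ i, (v n i) ^ 2) - ∑ i, (v (n + 1) i) ^ 2) := by
      have h1 : c ^ 2 / (2 * p * (1 - p) * (1 - μ ^ 2))
          * ((1 - μ ^ 2) * ((v n 0) ^ 2 + (v n 1) ^ 2))
          ≤ c ^ 2 / (2 * p * (1 - p) * (1 - μ ^ 2))
            * ((∑ i, (v n i) ^ 2) - ∑ i, (v (n + 1) i) ^ 2) := by
        apply mul_le_mul_of_nonneg_left _ hK
        linarith [hV]
      refine le_trans ?_ h1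
      have heq : c ^ 2 / (2 * p * (1 - p) * (1 - μ ^ 2))
          * ((1 - μ ^ 2) * ((v n 0) ^ 2 + (v n 1) ^ 2))
          = c ^ 2 * ((v n 0) ^ 2 + (v n 1) ^ 2) / (2 * p * (1 - p)) := by
        field_simp
      rw [heq]
      apply div_le_div_of_nonneg_left (by positivity) (by positivity) ?_
      rw [hμdef]; nlinarith
    linarith [ih, hW, hstep]

end
end

section
/- Let (u_k)_{k=0}^{n}, (r_k)_{k=0}^{n} be nonnegative real sequences and (t_k)_{k=1}^{n} ∈ [0,1], with u₀ = 0, r_k ≤ 1 for all k, t₀ := 1, and c ≥ 0. Suppose for each 1 ≤ k ≤ n: u_k ≤ t_k·u_{k−1} + t_k·c·(r_{k−1} − r_k + 1 − t_{k−1}). Then u_n ≤ 2c. -/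
/-- Abstract summation lemma: if `u₀ = 0`, `r_k ∈ [0,1]`, `t_k ∈ [0,1]`
with `t₀ = 1`, `c ≥ 0`, `u_k ≥ 0`, and for `1 ≤ k ≤ n`
`u_k ≤ t_k u_{k−1} + t_k c (r_{k−1} − r_k + 1 − t_{k−1})`, then `u_n ≤ 2c`. -/
theorem bounded_derivative_summation (n : ℕ) (u r t : ℕ → ℝ) (c : ℝ)
    (hu : ∀ k, 0 ≤ u k) (hr : ∀ k, 0 ≤ r k) (hr1 : ∀ k, r k ≤ 1)
    (ht : ∀ k, 0 ≤ t k) (ht1 : ∀ k, t k ≤ 1) (ht0 : t 0 = 1)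
    (hu0 : u 0 = 0) (hc : 0 ≤ c)
    (hrec : ∀ k < n, u (k + 1) ≤
      t (k + 1) * u k + t (k + 1) * c * (r k - r (k + 1) + 1 - t k)) :
    u n ≤ 2 * c := by
  have key : ∀ k, k ≤ n → u k ≤ c * t k * (2 - r k) := by
    intro k
    induction k with
    | zero =>
      intro _
      rw [hu0, ht0]
      nlinarith [hr 0, hr1 0]
    | succ k ih =>
      intro hk
      have h1 := ih (Nat.le_of_succ_le hk)
      have h2 := hrec k (Nat.lt_of_succ_le hk)
      nlinarith [ht (k + 1), ht1 (k + 1), ht k, ht1 k, hr k, hr1 k,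
        hr (k + 1), hr1 (k + 1),
        mul_nonneg (mul_nonneg (mul_nonneg hc (ht (k + 1)))
          (sub_nonneg.mpr (ht1 k))) (sub_nonneg.mpr (hr1 k)),
        mul_le_mul_of_nonneg_left h1 (ht (k + 1))]
  have := key n le_rfl
  nlinarith [hr n, hr1 n, ht n, ht1 n, mul_nonneg (ht n) (hr n)]
end
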